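/- A simple graph G on a finite vertex set admits a strong integer additive set-labeling if and only if there exists an injective assignment f of nonempty finite sets of nonnegative integers to the vertices of G such that for every pair of adjacent vertices u, v the difference sets D_{f(u)} and D_{f(v)} are disjoint. -/

import Mathlib

/-! |A + B| = |A|·|B| says that (a, b) ↦ a + b has no collisions on A × B, and a collision
a + b = a' + b' with a < a' is exactly a common difference a' - a = b - b' of A and B. -/

open Finset Pointwise

/-- The difference set of a finset of naturals:
the set of positive differences of distinct elements. -/
def diffSet (A : Finset ℕ) : Finset ℕ :=
  ((A ×ˢ A).filter fun p => p.2 < p.1).image fun p => p.1 - p.2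

lemma mem_diffSet {A : Finset ℕ} {d : ℕ} :
    d ∈ diffSet A ↔ ∃ a ∈ A, ∃ b ∈ A, b < a ∧ a - b = d := by
  simp only [diffSet, mem_image, mem_filter, mem_product, Prod.exists, and_assoc, exists_and_left]

lemma sub_mem_diffSet {A : Finset ℕ} {a b : ℕ} (ha : a ∈ A) (hb : b ∈ A) (hba : b < a) :
    a - b ∈ diffSet A :=
  mem_diffSet.2 ⟨a, ha, b, hb, hba, rfl⟩

lemma not_disjoint_diffSet_of_add_eq_add {A B : Finset ℕ} {a a' b b' : ℕ}
    (ha : a ∈ A) (ha' : a' ∈ A) (hb : b ∈ B) (hb' : b' ∈ B)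
    (hlt : a < a') (heq : a + b = a' + b') :
    ¬Disjoint (diffSet A) (diffSet B) := by
  have hB : a' - a ∈ diffSet B := by
    convert sub_mem_diffSet hb hb' (by omega) using 1
    omega
  exact Finset.disjoint_left.not.2 fun h => h (sub_mem_diffSet ha' ha hlt) hB

theorem card_add_eq_mul_iff_disjoint_diffSet (A B : Finset ℕ) :
    (A + B).card = A.card * B.card ↔ Disjoint (diffSet A) (diffSet B) := by
  rw [Finset.card_add_iff]
  constructor
  · intro hinj
    refine Finset.disjoint_left.2 fun d hdA hdB => ?_
    obtain ⟨a₁, ha₁, a₂, ha₂, hlta, rfl⟩ := mem_diffSet.1 hdA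
    obtain ⟨b₁, hb₁, b₂, hb₂, hltb, hdb⟩ := mem_diffSet.1 hdB
    have hpair : (a₁, b₂) = (a₂, b₁) :=
      hinj (Set.mk_mem_prod ha₁ hb₂) (Set.mk_mem_prod ha₂ hb₁) (by dsimp only; omega)
    exact hlta.ne' (congrArg Prod.fst hpair)
  · rintro hdisj ⟨a, b⟩ ⟨ha, hb⟩ ⟨a', b'⟩ ⟨ha', hb'⟩ (heq : a + b = a' + b')
    rcases lt_trichotomy a a' with hlt | rfl | hgt
    · exact absurd hdisj (not_disjoint_diffSet_of_add_eq_add ha ha' hb hb' hlt heq)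
    · rw [Nat.add_left_cancel heq]
    · exact absurd hdisj (not_disjoint_diffSet_of_add_eq_add ha' ha hb' hb hgt heq.symm)

theorem admits_strong_IASL_iff_exists_disjoint_diffSets_general
    {V : Type*} (G : SimpleGraph V) :
    (∃ f : V → Finset ℕ, (∀ v, (f v).Nonempty) ∧ Function.Injective f ∧
        ∀ u v, G.Adj u v → (f u + f v).card = (f u).card * (f v).card) ↔
      (∃ f : V → Finset ℕ, (∀ v, (f v).Nonempty) ∧ Function.Injective f ∧
        ∀ u v, G.Adj u v → Disjoint (diffSet (f u)) (diffSet (f v))) := by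
  simp only [card_add_eq_mul_iff_disjoint_diffSet]

/-- A graph admits a strong integer additive set-labeling iff there is an injective
assignment of nonempty finite sets of nonnegative integers to the vertices such that
the difference sets of the set-labels of any two adjacent vertices are disjoint. -/
theorem admits_strong_IASL_iff_exists_disjoint_diffSets
    {V : Type*} [Fintype V] (G : SimpleGraph V) :
    (∃ f : V → Finset ℕ, (∀ v, (f v).Nonempty) ∧ Function.Injective f ∧
        ∀ u v, G.Adj u v → (f u + f v).card = (f u).card * (f v).card) ↔
      (∃ f : V → Finset ℕ, (∀ v, (f v).Nonempty) ∧ Function.Injective f ∧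
        ∀ u v, G.Adj u v → Disjoint (diffSet (f u)) (diffSet (f v))) :=
  admits_strong_IASL_iff_exists_disjoint_diffSets_general G
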